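/- arXiv:2602.10459 — 2 statements merged into one kernel-verified Lean document; each statement's English description precedes it below -/
import Mathlib

section
/- The Flexi-clique property is not hereditary: there exists a graph G, a parameter τ ∈ [0,1), and a vertex set H that is a Flexi-clique, such that for some vertex x ∈ H, the set H \ {x} is not a Flexi-clique. Concretely, for τ = 0.75 there is a 6-vertex graph forming a Flexi-clique such that removing any single vertex violates the minimum-degree requirement ⌊5^0.75⌋ = 3. -/
open scoped Classical

/-- The degree of `x` inside the induced subgraph on vertex set `S`. -/
noncomputable def flexiDeg {V : Type*} (G : SimpleGraph V) (S : Finset V) (x : V) : ℕ :=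
  (S.filter (fun y => G.Adj x y)).card

/-- A Flexi-clique with parameter `τ`: connected induced subgraph in which every vertex
has degree at least `⌊|S|^τ⌋`. -/
def IsFlexiClique {V : Type*} (G : SimpleGraph V) (τ : ℝ) (S : Finset V) : Prop :=
  (∀ x ∈ S, ⌊(S.card : ℝ) ^ τ⌋₊ ≤ flexiDeg G S x) ∧ (G.induce (S : Set V)).Connected

/-- The bipartite graph `K_{3,3}` on `Fin 6`: vertices adjacent iff of different parity. -/
def myG : SimpleGraph (Fin 6) where
  Adj a b := (a.val + b.val) % 2 = 1
  symm := ⟨fun _ _ h => by omega⟩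
  loopless := ⟨fun _ h => by omega⟩

instance : DecidableRel myG.Adj := fun a b => inferInstanceAs (Decidable ((a.val + b.val) % 2 = 1))

lemma rpow_floor_aux (c : ℝ) (h0 : 0 ≤ c) (h1 : 81 ≤ c ^ (3 : ℕ))
    (h2 : c ^ (3 : ℕ) < 256) : ⌊c ^ (0.75 : ℝ)⌋₊ = 3 := by
  have hpos : (0 : ℝ) ≤ c ^ (0.75 : ℝ) := Real.rpow_nonneg h0 _
  have hkey : (c ^ (0.75 : ℝ)) ^ (4 : ℕ) = c ^ (3 : ℕ) := by
    rw [← Real.rpow_natCast (c ^ (0.75 : ℝ)) 4, ← Real.rpow_mul h0]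
    have : (0.75 : ℝ) * ((4 : ℕ) : ℝ) = ((3 : ℕ) : ℝ) := by norm_num
    rw [this, Real.rpow_natCast]
  have hlow : (3 : ℝ) ≤ c ^ (0.75 : ℝ) := by
    refine le_of_pow_le_pow_left₀ (n := 4) (by norm_num) hpos ?_
    rw [hkey]; norm_num; linarith
  have hhigh : c ^ (0.75 : ℝ) < 4 := by
    refine lt_of_pow_lt_pow_left₀ 4 (by norm_num) ?_
    rw [hkey]; norm_num; linarith
  rw [Nat.floor_eq_iff hpos]
  refine ⟨by exact_mod_cast hlow, ?_⟩
  push_cast; linarith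

lemma floor6 : ⌊(((6 : ℕ) : ℝ)) ^ (0.75 : ℝ)⌋₊ = 3 :=
  rpow_floor_aux _ (by norm_num) (by norm_num) (by norm_num)

lemma floor5 : ⌊(((5 : ℕ) : ℝ)) ^ (0.75 : ℝ)⌋₊ = 3 :=
  rpow_floor_aux _ (by norm_num) (by norm_num) (by norm_num)

lemma flexiDeg_eq (S : Finset (Fin 6)) (x : Fin 6) :
    flexiDeg myG S x = (S.filter (fun y => myG.Adj x y)).card := by
  unfold flexiDeg
  congr 1
  exact Finset.filter_congr_decidable _ _ _

/-- Flexi-clique is not hereditary: there is a 6-vertex graph whose whole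
vertex set is a Flexi-clique for τ = 0.75, yet removing any single vertex destroys the
Flexi-clique property. -/
theorem flexi_not_hereditary :
    ∃ (G : SimpleGraph (Fin 6)) (H : Finset (Fin 6)),
      IsFlexiClique G (0.75 : ℝ) H ∧ H.card = 6 ∧
      ∀ x ∈ H, ¬ IsFlexiClique G (0.75 : ℝ) (H.erase x) := by
  refine ⟨myG, Finset.univ, ⟨?_, ?_⟩, by simp, ?_⟩
  · intro x hx
    have hcard : (Finset.univ : Finset (Fin 6)).card = 6 := by simp
    rw [hcard, floor6, flexiDeg_eq]
    revert x
    decide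
  · have hiso : myG.induce ((Finset.univ : Finset (Fin 6)) : Set (Fin 6)) ≃g myG := by
      rw [Finset.coe_univ]
      exact myG.induceUnivIso
    rw [hiso.connected_iff, SimpleGraph.connected_iff]
    have h0 : ∀ w : Fin 6, myG.Reachable 0 w := by
      intro w
      fin_cases w
      · exact SimpleGraph.Reachable.refl _
      · exact SimpleGraph.Adj.reachable (by decide)
      · exact (SimpleGraph.Adj.reachable (u := 0) (v := 1) (by decide)).trans (SimpleGraph.Adj.reachable (by decide))
      · exact SimpleGraph.Adj.reachable (by decide)
      · exact (SimpleGraph.Adj.reachable (u := 0) (v := 1) (by decide)).trans (SimpleGraph.Adj.reachable (by decide))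
      · exact SimpleGraph.Adj.reachable (by decide)
    exact ⟨fun u v => (h0 u).symm.trans (h0 v), ⟨0⟩⟩
  · intro x hx h
    obtain ⟨hdeg, -⟩ := h
    have hcard : ((Finset.univ : Finset (Fin 6)).erase x).card = 5 := by
      rw [Finset.card_erase_of_mem hx]; simp
    rw [hcard, floor5] at hdeg
    have key : ∀ y ∈ (Finset.univ : Finset (Fin 6)).erase x,
        3 ≤ ((Finset.univ.erase x).filter (fun z => myG.Adj y z)).card := by
      intro y hy
      have := hdeg y hy
      rwa [flexiDeg_eq] at this
    refine absurd key ?_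
    clear key hdeg hcard hx
    revert x
    decide
end

section
/- In the blow-up graph G' (blocks C_v of size B, completely joined iff (u,v) ∈ E), suppose every clique of G has size at most K/c, and let S be any vertex set in G' such that for every u ∈ U := {v : S ∩ C_v ≠ ∅}, the total size ∑_{v ∈ U, (u,v)∉E} |S ∩ C_v| of S inside blocks of non-neighbors of u is at most B/4. Then |S| ≤ (5/4)·(K/c)·B. -/
open scoped Classical

/-- The blow-up of `G` with block size `B`: each vertex `v` is replaced by a clique
`C_v = {v} x Fin B`, and `C_u`, `C_v` are completely joined iff `G.Adj u v`. -/
def blowup {V : Type*} (G : SimpleGraph V) (B : ℕ) : SimpleGraph (V × Fin B) where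
  Adj x y := (x.1 = y.1 ∧ x.2 ≠ y.2) ∨ G.Adj x.1 y.1
  symm := by
    constructor
    intro x y h
    rcases h with ⟨h1, h2⟩ | h
    · exact Or.inl ⟨h1.symm, h2.symm⟩
    · exact Or.inr h.symm
  loopless := by
    constructor
    intro x h
    rcases h with ⟨_, h2⟩ | h
    · exact h2 rfl
    · exact G.irrefl h

lemma sum_biUnion_le' {α β : Type*} [DecidableEq β] (Q : Finset α) (f : α → Finset β)
    (g : β → ℝ) (hg : ∀ b, 0 ≤ g b) :
    ∑ b ∈ Q.biUnion f, g b ≤ ∑ a ∈ Q, ∑ b ∈ f a, g b := by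
  classical
  induction Q using Finset.induction with
  | empty => simp
  | @insert a s ha ih =>
    rw [Finset.biUnion_insert, Finset.sum_insert ha]
    calc ∑ b ∈ f a ∪ s.biUnion f, g b
        ≤ (∑ b ∈ f a ∪ s.biUnion f, g b) + ∑ b ∈ f a ∩ s.biUnion f, g b := by
          have : 0 ≤ ∑ b ∈ f a ∩ s.biUnion f, g b := Finset.sum_nonneg fun b _ => hg b
          linarith
      _ = (∑ b ∈ f a, g b) + ∑ b ∈ s.biUnion f, g b := Finset.sum_union_inter
      _ ≤ _ := by linarith [ih]


/-- NO-case bound for the blow-up. If every clique of `G` has size at most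
`K/c`, and `S` is a vertex set of the blow-up such that for every block `u` meeting `S`,
the total mass of `S` inside blocks of non-neighbours of `u` is at most `B/4`, then
`|S| ≤ (5/4)(K/c)B`. -/
theorem blowup_no_case {V : Type*} [Fintype V] [DecidableEq V] (G : SimpleGraph V)
    (B K : ℕ) (c : ℝ) (hc : 1 < c)
    (hclique : ∀ Q : Finset V, G.IsClique (Q : Set V) → (Q.card : ℝ) ≤ (K : ℝ) / c)
    (S : Finset (V × Fin B))
    (U : Finset V) (hU : U = Finset.univ.filter (fun v : V => (S.filter (fun x => x.1 = v)).Nonempty))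
    (hbound : ∀ u ∈ U,
      (∑ v ∈ U.filter (fun v => ¬ G.Adj u v), ((S.filter (fun x => x.1 = v)).card : ℝ))
        ≤ (B : ℝ) / 4) :
    (S.card : ℝ) ≤ 5 / 4 * ((K : ℝ) / c) * (B : ℝ) := by
  classical
  set a : V → ℝ := fun v => ((S.filter (fun x => x.1 = v)).card : ℝ) with ha
  have hanonneg : ∀ v, 0 ≤ a v := fun v => Nat.cast_nonneg _
  have haB : ∀ v, a v ≤ (B : ℝ) := by
    intro v
    have : (S.filter (fun x => x.1 = v)).card ≤ B := by
      have := Finset.card_le_card_of_injOn (f := Prod.snd)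
        (s := S.filter (fun x => x.1 = v)) (t := Finset.univ)
        (fun x _ => Finset.mem_univ _)
        (by
          intro x hx y hy hxy
          simp only [Finset.mem_coe, Finset.mem_filter] at hx hy
          exact Prod.ext (hx.2.trans hy.2.symm) hxy)
      simpa using this
    simp only [ha]; exact_mod_cast this
  -- total mass
  have htotal : (S.card : ℝ) = ∑ v ∈ U, a v := by
    have : S.card = ∑ v ∈ U, (S.filter (fun x => x.1 = v)).card := by
      apply Finset.card_eq_sum_card_fiberwise
      intro x hx
      rw [hU]
      exact Finset.mem_filter.2 ⟨Finset.mem_univ _, ⟨x, Finset.mem_filter.2 ⟨hx, rfl⟩⟩⟩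
    rw [this]
    push_cast
    rfl
  -- maximum clique in U
  obtain ⟨Q, hQmem, hQmax⟩ := Finset.exists_max_image
    ((U.powerset).filter (fun Q : Finset V => G.IsClique (Q : Set V))) Finset.card
    ⟨∅, by simp⟩
  rw [Finset.mem_filter, Finset.mem_powerset] at hQmem
  obtain ⟨hQU, hQclique⟩ := hQmem
  -- every v ∈ U \ Q has a non-neighbour in Q
  have hwitness : ∀ v ∈ U \ Q, ∃ u ∈ Q, ¬ G.Adj u v := by
    intro v hv
    rw [Finset.mem_sdiff] at hv
    by_contra hcon
    push_neg at hcon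
    have hclq : G.IsClique ((insert v Q : Finset V) : Set V) := by
      rw [Finset.coe_insert, SimpleGraph.isClique_insert]
      exact ⟨hQclique, fun b hb _ => (hcon b hb).symm⟩
    have hmem : insert v Q ∈ (U.powerset).filter (fun Q : Finset V => G.IsClique (Q : Set V)) := by
      rw [Finset.mem_filter, Finset.mem_powerset]
      exact ⟨Finset.insert_subset hv.1 hQU, hclq⟩
    have := hQmax _ hmem
    rw [Finset.card_insert_of_notMem hv.2] at this
    omega
  -- bound the sum outside Q
  have hout : ∑ v ∈ U \ Q, a v ≤ (Q.card : ℝ) * ((B : ℝ) / 4) := by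
    have hsub : U \ Q ⊆ Q.biUnion (fun u => U.filter (fun v => ¬ G.Adj u v)) := by
      intro v hv
      obtain ⟨u, hu, hnadj⟩ := hwitness v hv
      exact Finset.mem_biUnion.2 ⟨u, hu,
        Finset.mem_filter.2 ⟨(Finset.mem_sdiff.1 hv).1, hnadj⟩⟩
    calc ∑ v ∈ U \ Q, a v
        ≤ ∑ v ∈ Q.biUnion (fun u => U.filter (fun v => ¬ G.Adj u v)), a v :=
          Finset.sum_le_sum_of_subset_of_nonneg hsub (fun v _ _ => hanonneg v)
      _ ≤ ∑ u ∈ Q, ∑ v ∈ U.filter (fun v => ¬ G.Adj u v), a v :=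
          sum_biUnion_le' _ _ _ hanonneg
      _ ≤ ∑ u ∈ Q, (B : ℝ) / 4 :=
          Finset.sum_le_sum (fun u hu => hbound u (hQU hu))
      _ = (Q.card : ℝ) * ((B : ℝ) / 4) := by rw [Finset.sum_const]; simp [mul_comm]
  have hin : ∑ v ∈ Q, a v ≤ (Q.card : ℝ) * (B : ℝ) := by
    calc ∑ v ∈ Q, a v ≤ ∑ _v ∈ Q, (B : ℝ) := Finset.sum_le_sum (fun v _ => haB v)
      _ = (Q.card : ℝ) * (B : ℝ) := by rw [Finset.sum_const]; simp [mul_comm]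
  have hsplit : ∑ v ∈ U, a v = (∑ v ∈ Q, a v) + ∑ v ∈ U \ Q, a v := by
    rw [← Finset.sum_sdiff hQU]; ring
  have hQK : (Q.card : ℝ) ≤ (K : ℝ) / c := hclique Q hQclique
  have hB0 : (0:ℝ) ≤ (B : ℝ) := Nat.cast_nonneg _
  rw [htotal, hsplit]
  nlinarith [hanonneg, mul_le_mul_of_nonneg_right hQK hB0]
end
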